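/- The aromatic Lie derivative defined by the Cartan formula L_τ γ = (d i_τ + i_τ d) γ coincides with the vertical Cartan formula: L_τ γ = (d_V i_τ + i_τ d_V) γ for all γ ∈ Ω_{n,p} and τ ∈ Ω_1; in particular L_τ maps Ω_{n,p} into Ω_{n,p}. -/

import Mathlib

/-- Abstract model of the spaces of aromatic forms `Ω n p` inside an ambient
ℚ-module, with horizontal and vertical derivatives `dH`, `dV`, and the
contraction `i_τ` by an aromatic vector field `τ ∈ Ω 1 0`, which replaces the
last covertex by `τ` (and is zero on `Ω n 0`). The total derivative on `Ω n p`
is `d = (-1)^(n+p) dH + dV`. -/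
structure AromaticForms where
  M : Type
  [isAddCommGroup : AddCommGroup M]
  [isModule : Module ℚ M]
  Ω : ℕ → ℕ → Submodule ℚ M
  dH : M →ₗ[ℚ] M
  dH_mem : ∀ n p, ∀ x ∈ Ω (n + 1) p, dH x ∈ Ω n p
  dH_bot : ∀ p, ∀ x ∈ Ω 0 p, dH x = 0
  dV : M →ₗ[ℚ] M
  dV_mem : ∀ n p, ∀ x ∈ Ω n p, dV x ∈ Ω n (p + 1)
  contr : M → M →ₗ[ℚ] M
  contr_mem : ∀ τ ∈ Ω 1 0, ∀ n p, ∀ x ∈ Ω n (p + 1), contr τ x ∈ Ω n p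
  contr_bot : ∀ τ ∈ Ω 1 0, ∀ n, ∀ x ∈ Ω n 0, contr τ x = 0

attribute [instance] AromaticForms.isAddCommGroup AromaticForms.isModule

/-- The total derivative at parity `s = n + p`: `d γ = (-1)^s • dH γ + dV γ`. -/
def AromaticForms.d (B : AromaticForms) (s : ℕ) (γ : B.M) : B.M :=
  ((-1 : ℚ) ^ s) • B.dH γ + B.dV γ

/-!
Since `i_τ` commutes with `dH`, the horizontal parts of `d (i_τ γ)` and `i_τ (d γ)` carry the
opposite signs `(-1)^(n+p-1)` and `(-1)^(n+p)` and cancel, leaving the vertical Cartan formula.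
The vertical formula preserves `Ω n p` because `i_τ` lowers and `dV` raises the form degree `p`
by one, and `i_τ` vanishes on `Ω n 0`.
-/

namespace AromaticForms

variable (B : AromaticForms) {τ : B.M}

theorem contr_d_of_commute_dH {γ : B.M}
    (hcomm : B.contr τ (B.dH γ) = B.dH (B.contr τ γ)) (s : ℕ) :
    B.contr τ (B.d s γ) = (-1 : ℚ) ^ s • B.dH (B.contr τ γ) + B.contr τ (B.dV γ) := by
  rw [AromaticForms.d, map_add, map_smul, hcomm]

theorem dV_contr_add_contr_dV_mem (hτ : τ ∈ B.Ω 1 0) {n : ℕ} :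
    ∀ {p : ℕ} {γ : B.M}, γ ∈ B.Ω n p → B.dV (B.contr τ γ) + B.contr τ (B.dV γ) ∈ B.Ω n p
  | 0, γ, hγ => by
    rw [B.contr_bot τ hτ n γ hγ, map_zero, zero_add]
    exact B.contr_mem τ hτ n 0 _ (B.dV_mem n 0 γ hγ)
  | q + 1, γ, hγ =>
    add_mem (B.dV_mem n q _ (B.contr_mem τ hτ n q γ hγ))
      (B.contr_mem τ hτ n (q + 1) _ (B.dV_mem n (q + 1) γ hγ))

end AromaticForms

/-- The aromatic Lie derivative defined by the Cartan formula
`L_τ γ = d (i_τ γ) + i_τ (d γ)` (with `i_τ γ ∈ Ω n (p-1)` of parity `n+p-1`)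
coincides with the vertical Cartan formula `L_τ γ = dV (i_τ γ) + i_τ (dV γ)`
for all `γ ∈ Ω n p` and `τ ∈ Ω 1 0`, given that `i_τ` commutes with `dH`;
in particular `L_τ` maps `Ω n p` into `Ω n p`. -/
theorem cartan_formula_vertical (B : AromaticForms)
    (hcomm : ∀ τ ∈ B.Ω 1 0, ∀ n p, ∀ γ ∈ B.Ω n p,
      B.contr τ (B.dH γ) = B.dH (B.contr τ γ)) :
    ∀ τ ∈ B.Ω 1 0, ∀ n p : ℕ, ∀ γ ∈ B.Ω n p,
      (-(-1 : ℚ) ^ (n + p)) • B.dH (B.contr τ γ) + B.dV (B.contr τ γ)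
          + B.contr τ (B.d (n + p) γ)
        = B.dV (B.contr τ γ) + B.contr τ (B.dV γ)
      ∧ B.dV (B.contr τ γ) + B.contr τ (B.dV γ) ∈ B.Ω n p := by
  intro τ hτ n p γ hγ
  refine ⟨?_, B.dV_contr_add_contr_dV_mem hτ hγ⟩
  rw [B.contr_d_of_commute_dH (hcomm τ hτ n p γ hγ), neg_smul]
  abel
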